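/- The local degree of a map at a nondegenerate zero equals the sign of the Jacobian determinant: let F : ℝ^m → ℝ^m be a C^∞ map with F(p) = 0 and det DF(p) ≠ 0. Then for all sufficiently small r > 0, F has no zero on the closed ball B̄(p, r) other than p, and the degree of the map x ↦ F(x)/‖F(x)‖ from the sphere ∂B(p, r) to S^{m−1} equals sgn(det DF(p)). -/

import Mathlib

/-- A Brouwer degree theory for maps from spheres `∂B(p, r) ⊆ ℝ^m` to the standard unit
sphere `S^{m-1}`: an integer-valued invariant which is homotopy invariant and is
normalized on the maps induced by linear isomorphisms `A` (i.e. on any continuous map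
`γ` with `γ x = A(x - p)/‖A(x - p)‖`, whose degree is the sign of `det A`). -/
structure SphereDegree (m : ℕ) where
  deg : ∀ (p : EuclideanSpace ℝ (Fin m)) (r : ℝ),
    C(Metric.sphere p r, Metric.sphere (0 : EuclideanSpace ℝ (Fin m)) 1) → ℤ
  homotopy_invariant : ∀ (p : EuclideanSpace ℝ (Fin m)) (r : ℝ)
    (γ₁ γ₂ : C(Metric.sphere p r, Metric.sphere (0 : EuclideanSpace ℝ (Fin m)) 1)),
    γ₁.Homotopic γ₂ → deg p r γ₁ = deg p r γ₂
  deg_linear : ∀ (A : EuclideanSpace ℝ (Fin m) ≃L[ℝ] EuclideanSpace ℝ (Fin m))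
    (p : EuclideanSpace ℝ (Fin m)) (r : ℝ), 0 < r →
    ∀ γ : C(Metric.sphere p r, Metric.sphere (0 : EuclideanSpace ℝ (Fin m)) 1),
      (∀ x : Metric.sphere p r,
        ‖A ((x : EuclideanSpace ℝ (Fin m)) - p)‖ • (γ x : EuclideanSpace ℝ (Fin m))
          = A ((x : EuclideanSpace ℝ (Fin m)) - p)) →
      deg p r γ = if 0 < LinearMap.det (A.toLinearEquiv.toLinearMap) then 1 else -1

/-- The local degree of a smooth map at a nondegenerate zero equals
the sign of the Jacobian determinant: let `F : ℝ^m → ℝ^m` be `C^∞` with `F p = 0` and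
`det DF(p) ≠ 0`.  Then for all sufficiently small `r > 0`, `F` has no zero on the
closed ball `B̄(p, r)` other than `p`, and the degree of the normalized map
`x ↦ F x / ‖F x‖ : ∂B(p, r) → S^{m-1}` equals `sgn (det DF(p))`.  (The normalized map
is represented by any continuous map `γ` with `‖F x‖ • γ x = F x` on the sphere.) -/
theorem localDegree_eq_sign_jacobian_det (m : ℕ) (D : SphereDegree m)
    (F : EuclideanSpace ℝ (Fin m) → EuclideanSpace ℝ (Fin m)) (hF : ContDiff ℝ (⊤ : ℕ∞) F)
    (p : EuclideanSpace ℝ (Fin m)) (hFp : F p = 0)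
    (hdet : LinearMap.det (fderiv ℝ F p).toLinearMap ≠ 0) :
    ∃ r₀ > (0 : ℝ), ∀ r : ℝ, 0 < r → r < r₀ →
      (∀ x ∈ Metric.closedBall p r, F x = 0 → x = p) ∧
      ∀ γ : C(Metric.sphere p r, Metric.sphere (0 : EuclideanSpace ℝ (Fin m)) 1),
        (∀ x : Metric.sphere p r,
          ‖F (x : EuclideanSpace ℝ (Fin m))‖ • (γ x : EuclideanSpace ℝ (Fin m))
            = F (x : EuclideanSpace ℝ (Fin m))) →
        D.deg p r γ
          = if 0 < LinearMap.det (fderiv ℝ F p).toLinearMap then 1 else -1 := by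
  set A := fderiv ℝ F p with hA
  set Aeq := (A.toLinearMap.equivOfDetNeZero hdet).toContinuousLinearEquiv with hAeq
  have hAfun : ∀ v, Aeq v = A v := fun v => rfl
  have hdet2 : LinearMap.det (Aeq.toLinearEquiv.toLinearMap) = LinearMap.det A.toLinearMap := by
    congr 1
  set C : ℝ := ‖(Aeq.symm : EuclideanSpace ℝ (Fin m) →L[ℝ] EuclideanSpace ℝ (Fin m))‖ with hC
  have hC0 : 0 ≤ C := norm_nonneg _
  have hlow : ∀ v, ‖v‖ ≤ C * ‖A v‖ := by
    intro v
    have h1 : Aeq.symm (A v) = v := by rw [← hAfun]; exact Aeq.symm_apply_apply v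
    calc ‖v‖ = ‖Aeq.symm (A v)‖ := by rw [h1]
    _ ≤ C * ‖A v‖ :=
      (Aeq.symm : EuclideanSpace ℝ (Fin m) →L[ℝ] EuclideanSpace ℝ (Fin m)).le_opNorm _
  set c : ℝ := 1 / (2 * (C + 1)) with hc
  have hc0 : 0 < c := by positivity
  have h3 : c * (2 * (C + 1)) = 1 := by rw [hc]; exact one_div_mul_cancel (ne_of_gt (by linarith))
  have hd : HasFDerivAt F A p := (hF.differentiable (by simp) p).hasFDerivAt
  have hev : ∀ᶠ x in nhds p, ‖F x - A (x - p)‖ ≤ c * ‖x - p‖ := by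
    filter_upwards [hd.isLittleO.bound hc0] with x hx
    simpa [hFp] using hx
  rw [Metric.eventually_nhds_iff] at hev
  obtain ⟨ε, hε0, hε⟩ := hev
  refine ⟨ε, hε0, fun r hr hrε => ?_⟩
  have key : ∀ x : EuclideanSpace ℝ (Fin m), dist x p ≤ r → ‖F x - A (x - p)‖ ≤ c * ‖x - p‖ :=
    fun x hx => hε (lt_of_le_of_lt hx hrε)
  have hAbig : ∀ x : EuclideanSpace ℝ (Fin m), 2 * c * ‖x - p‖ ≤ ‖A (x - p)‖ := by
    intro x
    have := hlow (x - p)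
    nlinarith [norm_nonneg (A (x - p)), norm_nonneg (x - p)]
  refine ⟨?_, ?_⟩
  · intro x hx hFx
    have h1 := key x (Metric.mem_closedBall.mp hx)
    rw [hFx, zero_sub, norm_neg] at h1
    have h2 := hlow (x - p)
    have : ‖x - p‖ = 0 := by nlinarith [norm_nonneg (x - p), norm_nonneg (A (x - p))]
    exact sub_eq_zero.mp (norm_eq_zero.mp this)
  · intro γ hγ
    set G : ℝ → EuclideanSpace ℝ (Fin m) → EuclideanSpace ℝ (Fin m) :=
      fun t x => F x + t • (A (x - p) - F x) with hG
    -- norm on sphere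
    have hsph : ∀ x : Metric.sphere p r, ‖(x : EuclideanSpace ℝ (Fin m)) - p‖ = r := by
      intro x
      rw [← dist_eq_norm]
      exact x.2
    have hGlow : ∀ (t : ℝ), t ∈ Set.Icc (0:ℝ) 1 → ∀ x : Metric.sphere p r,
        c * r ≤ ‖G t ((x : EuclideanSpace ℝ (Fin m)))‖ := by
      intro t ht x
      have hkey := key x (le_of_eq x.2)
      rw [hsph x] at hkey
      have hdiff : G t (x : EuclideanSpace ℝ (Fin m)) - A ((x : EuclideanSpace ℝ (Fin m)) - p)
          = (1 - t) • (F (x : EuclideanSpace ℝ (Fin m))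
              - A ((x : EuclideanSpace ℝ (Fin m)) - p)) := by
        simp only [hG]
        module
      have h4 : ‖G t (x : EuclideanSpace ℝ (Fin m))
          - A ((x : EuclideanSpace ℝ (Fin m)) - p)‖ ≤ c * r := by
        rw [hdiff, norm_smul, Real.norm_eq_abs, abs_of_nonneg (by linarith [ht.2])]
        calc (1 - t) * ‖F (x : EuclideanSpace ℝ (Fin m))
            - A ((x : EuclideanSpace ℝ (Fin m)) - p)‖
            ≤ 1 * (c * r) := by
              apply mul_le_mul (by linarith [ht.1]) hkey (norm_nonneg _) zero_le_one
        _ = c * r := one_mul _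
      have h5 := hAbig (x : EuclideanSpace ℝ (Fin m))
      rw [hsph x] at h5
      have h6 := norm_sub_norm_le (A ((x : EuclideanSpace ℝ (Fin m)) - p))
        (G t (x : EuclideanSpace ℝ (Fin m)))
      rw [norm_sub_rev] at h6
      linarith
    have hGne : ∀ (t : ℝ), t ∈ Set.Icc (0:ℝ) 1 → ∀ x : Metric.sphere p r,
        ‖G t ((x : EuclideanSpace ℝ (Fin m)))‖ ≠ 0 := fun t ht x =>
      ne_of_gt (lt_of_lt_of_le (by positivity) (hGlow t ht x))
    have hGcont : Continuous (fun q : unitInterval × Metric.sphere p r =>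
        G (q.1 : ℝ) ((q.2 : EuclideanSpace ℝ (Fin m)))) := by
      have hFc := hF.continuous
      simp only [hG]
      fun_prop
    have hmem : ∀ q : unitInterval × Metric.sphere p r,
        ‖G (q.1 : ℝ) ((q.2 : EuclideanSpace ℝ (Fin m)))‖⁻¹
            • G (q.1 : ℝ) ((q.2 : EuclideanSpace ℝ (Fin m)))
          ∈ Metric.sphere (0 : EuclideanSpace ℝ (Fin m)) 1 := by
      intro q
      rw [mem_sphere_zero_iff_norm, norm_smul, norm_inv, norm_norm]
      exact inv_mul_cancel₀ (hGne _ q.1.2 q.2)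
    set H0 : C(unitInterval × Metric.sphere p r, Metric.sphere (0 : EuclideanSpace ℝ (Fin m)) 1) :=
      ⟨fun q => ⟨_, hmem q⟩,
        Continuous.subtype_mk
          ((hGcont.norm.inv₀ fun q => hGne _ q.1.2 q.2).smul hGcont) _⟩ with hH0
    set γA : C(Metric.sphere p r, Metric.sphere (0 : EuclideanSpace ℝ (Fin m)) 1) :=
      ⟨fun x => H0 (1, x),
        H0.continuous.comp (Continuous.prodMk continuous_const continuous_id)⟩ with hγA
    have hFne : ∀ x : Metric.sphere p r, F ((x : EuclideanSpace ℝ (Fin m))) ≠ 0 := by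
      intro x
      have h7 := hGlow 0 ⟨le_refl 0, zero_le_one⟩ x
      simp only [hG, zero_smul, add_zero] at h7
      intro h
      rw [h, norm_zero] at h7
      nlinarith
    have hhom : γ.Homotopic γA := by
      refine ⟨⟨H0, ?_, ?_⟩⟩
      · intro x
        apply Subtype.ext
        show ‖G ((0 : unitInterval) : ℝ) ((x : EuclideanSpace ℝ (Fin m)))‖⁻¹
            • G ((0 : unitInterval) : ℝ) ((x : EuclideanSpace ℝ (Fin m)))
          = (γ x : EuclideanSpace ℝ (Fin m))
        have hG0 : G ((0 : unitInterval) : ℝ) ((x : EuclideanSpace ℝ (Fin m)))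
            = F ((x : EuclideanSpace ℝ (Fin m))) := by
          simp [hG]
        rw [hG0]
        exact (inv_smul_eq_iff₀ (norm_ne_zero_iff.mpr (hFne x))).mpr (hγ x).symm
      · intro x
        rfl
    have hprop : ∀ x : Metric.sphere p r,
        ‖Aeq ((x : EuclideanSpace ℝ (Fin m)) - p)‖ • (γA x : EuclideanSpace ℝ (Fin m))
          = Aeq ((x : EuclideanSpace ℝ (Fin m)) - p) := by
      intro x
      have hG1 : G ((1 : unitInterval) : ℝ) ((x : EuclideanSpace ℝ (Fin m)))
          = A ((x : EuclideanSpace ℝ (Fin m)) - p) := by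
        simp [hG]
      show ‖Aeq ((x : EuclideanSpace ℝ (Fin m)) - p)‖
          • (‖G ((1 : unitInterval) : ℝ) ((x : EuclideanSpace ℝ (Fin m)))‖⁻¹
              • G ((1 : unitInterval) : ℝ) ((x : EuclideanSpace ℝ (Fin m))))
        = Aeq ((x : EuclideanSpace ℝ (Fin m)) - p)
      rw [hG1, hAfun]
      have hAne : ‖A ((x : EuclideanSpace ℝ (Fin m)) - p)‖ ≠ 0 := by
        have h5 := hAbig (x : EuclideanSpace ℝ (Fin m))
        rw [hsph x] at h5
        nlinarith
      exact smul_inv_smul₀ hAne _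
    have e1 := D.homotopy_invariant p r γ γA hhom
    have e2 := D.deg_linear Aeq p r hr γA hprop
    rw [e1, e2, hdet2]
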